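/- arXiv:1312.2201 — 4 statements merged into one kernel-verified Lean document; each statement's English description precedes it below -/
import Mathlib

section
/- Let Q be a nonnegative finite irreducible transition kernel on the nonnegative integers (Q(i,ℤ₊) ∈ (0,∞) for all i, and for all i,j there exists n with Qⁿ(i,j) > 0). Let P(i,j) = Q(i,j)/Q(i,ℤ₊) be the associated stochastic kernel with Markov chain (Xₙ), and define f(i) = E_i ∏_{n=0}^∞ Q(Xₙ, ℤ₊), assuming E_i ∏_{n=0}^∞ max(Q(Xₙ,ℤ₊),1) < ∞ for all i. If f(i) > 0 for some i ∈ ℤ₊, then f(j) > 0 for every j ∈ ℤ₊. -/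
open MeasureTheory Filter Topology
open scoped ENNReal NNReal

structure MC where
  μ : ℕ → Measure (ℕ → ℕ)
  prob : ∀ i, IsProbabilityMeasure (μ i)
  start : ∀ i, μ i {ω | ω 0 = i} = 1
  P : ℕ → ℕ → ℝ≥0∞
  P_sum : ∀ i, ∑' j, P i j = 1
  markov : ∀ i, (μ i).map (fun ω n => ω (n + 1)) = Measure.sum fun j => P i j • μ j

noncomputable def qt (Q : ℕ → ℕ → ℝ≥0∞) (i : ℕ) : ℝ≥0∞ := ∑' j, Q i j

noncomputable def fQ (Q : ℕ → ℕ → ℝ≥0∞) (X : MC) (i : ℕ) : ℝ≥0∞ :=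
  ∫⁻ ω, ∏' n, qt Q (ω n) ∂(X.μ i)

def condC (Q : ℕ → ℕ → ℝ≥0∞) (X : MC) : Prop :=
  ∀ i, (∫⁻ ω, ∏' n, max (qt Q (ω n)) 1 ∂(X.μ i)) < ∞

noncomputable def Qpow (Q : ℕ → ℕ → ℝ≥0∞) : ℕ → ℕ → ℕ → ℝ≥0∞
  | 0 => fun i j => if i = j then 1 else 0
  | n + 1 => fun i j => ∑' k, Q i k * Qpow Q n k j

def Irred (Q : ℕ → ℕ → ℝ≥0∞) : Prop := ∀ i j, ∃ n, 0 < Qpow Q n i j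

noncomputable def locTime (j : ℕ) (ω : ℕ → ℕ) : ℝ≥0∞ := ∑' n, if ω n = j then 1 else 0

noncomputable def locExp (γ : ℝ) (j : ℕ) (ω : ℕ → ℕ) : ℝ≥0∞ :=
  ∏' n, if ω n = j then ENNReal.ofReal (Real.exp γ) else 1

noncomputable def deltaQ (Q : ℕ → ℕ → ℝ≥0∞) (j : ℕ) : ℝ := Real.log (qt Q j).toReal

noncomputable def jumpP (X : MC) (i : ℕ) (j : ℤ) : ℝ≥0∞ :=
  if 0 ≤ (i : ℤ) + j then X.P i ((i : ℤ) + j).toNat else 0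

/-!
Conditioning on the first step gives `f(i) ≥ Q(i,j) f(j)`: under `E_i` the product splits off the
factor `Q(i,ℤ₊)`, and the remaining product, started from `X₁`, has law `∑_j P(i,j) E_j`. The
integrability condition makes the infinite product genuinely convergent almost surely, so that this
splitting is legitimate. Iterating along a path witnessing `Qⁿ(j,i₀) > 0` carries positivity from
`i₀` back to `j`.
-/

namespace ENNReal

variable {α : Type*}

theorem multipliable_of_one_le {f : α → ℝ≥0∞} (h : ∀ i, 1 ≤ f i) : Multipliable f :=
  ⟨_, hasProd_of_isLUB_of_one_le _ h isLUB_iSup⟩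

/-- Multiplication on `ℝ≥0∞` is not continuous at `(0, ∞)`; writing `f = min f 1 * max f 1`, the
limit of the second factor is finite and nonzero, which avoids that point. -/
theorem multipliable_of_tprod_max_one_ne_top {f : α → ℝ≥0∞} (h : ∏' i, max (f i) 1 ≠ ∞) :
    Multipliable f := by
  have hmin := (multipliable_of_le_one fun i => min_le_right (f i) 1).hasProd
  have hmax := (multipliable_of_one_le fun i => le_max_right (f i) 1).hasProd
  have hmax_ne_zero : ∏' i, max (f i) 1 ≠ 0 :=
    (one_le_tprod fun i => le_max_right (f i) 1).trans_lt' zero_lt_one |>.ne'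
  exact ⟨_, by simpa only [HasProd, ← Finset.prod_mul_distrib, min_mul_max, mul_one] using
    ENNReal.Tendsto.mul hmin (Or.inr h) hmax (Or.inl hmax_ne_zero)⟩

theorem tprod_succ_le_tprod_of_one_le {f : ℕ → ℝ≥0∞} (h : ∀ n, 1 ≤ f n) :
    ∏' n, f (n + 1) ≤ ∏' n, f n :=
  (multipliable_of_one_le fun n => h (n + 1)).tprod_le_tprod_of_inj _ (add_left_injective 1)
    (fun n _ => h n) (fun _ => le_rfl) (multipliable_of_one_le h)

theorem tprod_eq_zero_mul {f : ℕ → ℝ≥0∞} (hf : Multipliable f)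
    (hf' : Multipliable fun n => f (n + 1)) (h0 : f 0 ≠ ∞) :
    ∏' n, f n = f 0 * ∏' n, f (n + 1) := by
  refine tendsto_nhds_unique (hf.hasProd.tendsto_prod_nat.comp (tendsto_add_atTop_nat 1)) ?_
  simpa only [Function.comp_def, Finset.prod_range_succ', mul_comm (f 0)] using
    ENNReal.Tendsto.const_mul hf'.hasProd.tendsto_prod_nat (Or.inr h0)

theorem tprod_eq_zero_mul_of_tprod_max_one_ne_top {f : ℕ → ℝ≥0∞}
    (h : ∏' n, max (f n) 1 ≠ ∞) (h0 : f 0 ≠ ∞) : ∏' n, f n = f 0 * ∏' n, f (n + 1) :=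
  tprod_eq_zero_mul (multipliable_of_tprod_max_one_ne_top h)
    (multipliable_of_tprod_max_one_ne_top <| ne_top_of_le_ne_top h <|
      tprod_succ_le_tprod_of_one_le fun n => le_max_right (f n) 1) h0

end ENNReal

theorem MC.ae_start (X : MC) (i : ℕ) : ∀ᵐ ω ∂X.μ i, ω 0 = i := by
  have := X.prob i
  have hmeas : MeasurableSet {ω : ℕ → ℕ | ω 0 = i} :=
    (measurableSet_singleton i).preimage (measurable_pi_apply 0)
  exact (prob_compl_eq_zero_iff hmeas).2 (X.start i)

theorem pos_of_qpow_pos {Q : ℕ → ℕ → ℝ≥0∞} {f : ℕ → ℝ≥0∞} (hf : ∀ i j, Q i j * f j ≤ f i)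
    {n i j : ℕ} (hn : 0 < Qpow Q n i j) (hj : 0 < f j) : 0 < f i := by
  induction n generalizing i with
  | zero =>
    obtain rfl : i = j := by by_contra hij; simp [Qpow, hij] at hn
    exact hj
  | succ n ih =>
    obtain ⟨k, hk⟩ : ∃ k, Q i k * Qpow Q n k j ≠ 0 := by
      simpa [Qpow, ENNReal.tsum_eq_zero] using hn.ne'
    rw [mul_ne_zero_iff] at hk
    exact (ENNReal.mul_pos hk.1 (ih (pos_iff_ne_zero.2 hk.2)).ne').trans_le (hf i k)

section

variable {Q : ℕ → ℕ → ℝ≥0∞} {X : MC}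

theorem qt_mul_P_eq (hfin : ∀ i, qt Q i < ∞) (hP : ∀ i j, X.P i j = Q i j / qt Q i) (i j : ℕ) :
    qt Q i * X.P i j = Q i j := by
  rw [hP]
  exact ENNReal.mul_div_cancel' (fun h => ENNReal.tsum_eq_zero.1 h j) fun h => absurd h (hfin i).ne

theorem ae_tprod_qt_eq (hfin : ∀ i, qt Q i < ∞) (hC : condC Q X) (i : ℕ) :
    ∀ᵐ ω ∂X.μ i, ∏' n, qt Q (ω n) = qt Q i * ∏' n, qt Q (ω (n + 1)) := by
  filter_upwards [X.ae_start i, ae_lt_top (by fun_prop) (hC i).ne] with ω h0 hω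
  rw [← h0]
  exact ENNReal.tprod_eq_zero_mul_of_tprod_max_one_ne_top hω.ne (hfin _).ne

theorem mul_fQ_le (hfin : ∀ i, qt Q i < ∞) (hP : ∀ i j, X.P i j = Q i j / qt Q i)
    (hC : condC Q X) (i j : ℕ) : Q i j * fQ Q X j ≤ fQ Q X i :=
  calc Q i j * fQ Q X j = qt Q i * ∫⁻ ω, ∏' n, qt Q (ω n) ∂(X.P i j • X.μ j) := by
        rw [lintegral_smul_measure, smul_eq_mul, ← mul_assoc, qt_mul_P_eq hfin hP, fQ]
    _ ≤ qt Q i * ∫⁻ ω, ∏' n, qt Q (ω n) ∂((X.μ i).map fun ω n => ω (n + 1)) := by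
        rw [X.markov i]
        exact mul_le_mul_right (lintegral_mono' (Measure.le_sum _ j) le_rfl) _
    _ ≤ qt Q i * ∫⁻ ω, ∏' n, qt Q (ω (n + 1)) ∂X.μ i :=
        mul_le_mul_right (lintegral_map_le _ _) _
    _ = ∫⁻ ω, qt Q i * ∏' n, qt Q (ω (n + 1)) ∂X.μ i :=
        (lintegral_const_mul' _ _ (hfin i).ne).symm
    _ = fQ Q X i := lintegral_congr_ae ((ae_tprod_qt_eq hfin hC i).mono fun _ h => h.symm)

end

theorem stmt0_general (Q : ℕ → ℕ → ℝ≥0∞) (X : MC)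
    (hfin : ∀ i, qt Q i < ∞)
    (hirr : Irred Q)
    (hP : ∀ i j, X.P i j = Q i j / qt Q i)
    (hC : condC Q X)
    (i₀ : ℕ) (h : 0 < fQ Q X i₀) :
    ∀ j, 0 < fQ Q X j := by
  intro j
  obtain ⟨n, hn⟩ := hirr j i₀
  exact pos_of_qpow_pos (mul_fQ_le hfin hP hC) hn h

theorem stmt0 (Q : ℕ → ℕ → ℝ≥0∞) (X : MC)
    (hpos : ∀ i, 0 < qt Q i) (hfin : ∀ i, qt Q i < ∞)
    (hirr : Irred Q)
    (hP : ∀ i j, X.P i j = Q i j / qt Q i)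
    (hC : condC Q X)
    (i₀ : ℕ) (h : 0 < fQ Q X i₀) :
    ∀ j, 0 < fQ Q X j :=
  stmt0_general Q X hfin hirr hP hC i₀ h
end

section
/- Let δ(j) = log Q(j,ℤ₊) and δ⁻ = max(−δ,0). Suppose: (i) ∑_{i=0}^∞ δ⁻(i) < ∞; (ii) for every fixed N, P_i{Xₙ > N for all n ≥ 0} → 1 as i → ∞; (iii) sup_{i∈ℤ₊} E_i ℓ(i) < ∞, where ℓ(j) = ∑_{n=0}^∞ 1{Xₙ = j} is the local time at j. Then liminf_{i→∞} f(i) ≥ 1, and in particular inf_{i∈ℤ₊} f(i) > 0, where f(i) = E_i ∏_{n=0}^∞ Q(Xₙ,ℤ₊). -/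
open MeasureTheory Filter Topology
open scoped ENNReal NNReal

/-!
Write `q j = Q(j, ℤ₊)`; the deficit `1 - min (q j) 1` is at most `δ⁻(j)` since `1 - t ≤ -log t`.
Pathwise `∏ q(Xₙ) ≥ 1 - ∑ₙ (deficit of Xₙ)` (Weierstrass), so `f i ≥ 1 - ∑ⱼ δ⁻(j) E_i ℓ(j)`.
The strong Markov property at the first visit to `j` gives
`E_i ℓ(j) = P_i(X visits j) · E_j ℓ(j) ≤ P_i(X visits j) · supₖ E_k ℓ(k)`, and the hitting
probabilities tend to `0` by (ii); dominated convergence, with (i) and (iii), makes the sum vanish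
as `i → ∞`, so `liminf f ≥ 1`. For the infimum it remains to see `f i > 0` for every `i`: the
expected total deficit is finite, so almost surely the deficit series converges, and then the
infinite product of the positive numbers `q(Xₙ)` is positive.
-/

attribute [local instance] MC.prob

lemma one_sub_sum_le_prod_of_le_one {ι : Type*} (s : Finset ι) (b : ι → ℝ≥0∞)
    (hb : ∀ i ∈ s, b i ≤ 1) : 1 - ∑ i ∈ s, (1 - b i) ≤ ∏ i ∈ s, b i := by
  classical
  induction s using Finset.induction_on with
  | empty => simp
  | insert a s ha ih =>
    have hba : b a ≤ 1 := hb a (Finset.mem_insert_self a s)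
    have hS : 1 - ∑ i ∈ s, (1 - b i) ≤ ∏ i ∈ s, b i :=
      ih fun i hi => hb i (Finset.mem_insert_of_mem hi)
    rw [Finset.prod_insert ha, Finset.sum_insert ha, tsub_add_eq_tsub_tsub,
      ENNReal.sub_sub_cancel ENNReal.one_ne_top hba]
    calc b a - ∑ i ∈ s, (1 - b i)
        ≤ b a - b a * ∑ i ∈ s, (1 - b i) := tsub_le_tsub_left (mul_le_of_le_one_left' hba) _
      _ = b a * (1 - ∑ i ∈ s, (1 - b i)) := by
        rw [ENNReal.mul_sub fun _ _ => (hba.trans_lt ENNReal.one_lt_top).ne, mul_one]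
      _ ≤ b a * ∏ i ∈ s, b i := by gcongr

lemma prod_min_one_mul_one_sub_tsum_le_tprod (a : ℕ → ℝ≥0∞) (M : ℕ) :
    (∏ n ∈ Finset.range M, min (a n) 1) * (1 - ∑' n, (1 - min (a (n + M)) 1)) ≤ ∏' n, a n := by
  by_cases ha : Multipliable a
  · refine ge_of_tendsto ha.hasProd.tendsto_prod_nat ?_
    filter_upwards [eventually_ge_atTop M] with N hN
    obtain ⟨K, rfl⟩ := Nat.exists_eq_add_of_le hN
    rw [Finset.prod_range_add]
    gcongr with n
    · exact min_le_left _ _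
    calc 1 - ∑' n, (1 - min (a (n + M)) 1)
        ≤ 1 - ∑ k ∈ Finset.range K, (1 - min (a (M + k)) 1) := by
          gcongr
          simp_rw [add_comm M]
          exact ENNReal.sum_le_tsum _
      _ ≤ ∏ k ∈ Finset.range K, min (a (M + k)) 1 :=
          one_sub_sum_le_prod_of_le_one _ _ fun _ _ => min_le_right _ _
      _ ≤ ∏ k ∈ Finset.range K, a (M + k) := by gcongr; exact min_le_left _ _
  -- a divergent product is `1` by convention
  · rw [tprod_eq_one_of_not_multipliable ha]
    exact mul_le_one' (Finset.prod_le_one' fun _ _ => min_le_right _ _) tsub_le_self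

lemma one_sub_tsum_le_tprod (a : ℕ → ℝ≥0∞) : 1 - ∑' n, (1 - min (a n) 1) ≤ ∏' n, a n := by
  simpa using prod_min_one_mul_one_sub_tsum_le_tprod a 0

lemma tprod_pos_of_tsum_ne_top {a : ℕ → ℝ≥0∞} (ha : ∀ n, 0 < a n)
    (h : ∑' n, (1 - min (a n) 1) ≠ ∞) : 0 < ∏' n, a n := by
  obtain ⟨M, hM⟩ :=
    ((ENNReal.tendsto_sum_nat_add _ h).eventually_lt_const zero_lt_one).exists
  refine lt_of_lt_of_le ?_ (prod_min_one_mul_one_sub_tsum_le_tprod a M)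
  refine ENNReal.mul_pos ?_ (tsub_pos_of_lt hM).ne'
  exact Finset.prod_ne_zero_iff.2 fun n _ => (lt_min (ha n) zero_lt_one).ne'

lemma one_sub_min_one_le_ofReal_neg_log {x : ℝ≥0∞} (hx : 0 < x) :
    1 - min x 1 ≤ ENNReal.ofReal (max (-Real.log x.toReal) 0) := by
  rcases le_or_gt 1 x with h1 | h1
  · simp [min_eq_right h1]
  have hx' : 0 < x.toReal := ENNReal.toReal_pos hx.ne' (h1.trans ENNReal.one_lt_top).ne
  rw [min_eq_left h1.le, ← ENNReal.ofReal_toReal (h1.trans ENNReal.one_lt_top).ne,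
    ← ENNReal.ofReal_one, ← ENNReal.ofReal_sub _ hx'.le, ENNReal.toReal_ofReal hx'.le]
  gcongr
  exact le_max_of_le_left (by linarith [Real.log_le_sub_one_of_pos hx'])

lemma ENNReal.tendsto_tsum_of_dominated_convergence {F : ℕ → ℕ → ℝ≥0∞} {f bound : ℕ → ℝ≥0∞}
    (h_bound : ∀ i j, F i j ≤ bound j) (h_fin : ∑' j, bound j ≠ ∞)
    (h_lim : ∀ j, Tendsto (fun i => F i j) atTop (𝓝 (f j))) :
    Tendsto (fun i => ∑' j, F i j) atTop (𝓝 (∑' j, f j)) := by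
  simp_rw [← lintegral_count]
  exact tendsto_lintegral_of_dominated_convergence bound (fun _ => measurable_of_countable _)
    (fun i => .of_forall (h_bound i)) (by rwa [lintegral_count]) (.of_forall h_lim)

lemma lt_iInf_of_forall_lt_of_eventually_le {α : Type*} [CompleteLinearOrder α] {f : ℕ → α}
    {a c : α} (hf : ∀ i, a < f i) (hc : a < c) (h : ∀ᶠ i in atTop, c ≤ f i) : a < ⨅ i, f i := by
  obtain ⟨N, hN⟩ := eventually_atTop.1 h
  have hhead : a < (Finset.range N).inf f :=
    ((Finset.range N).lt_inf_iff (hc.trans_le le_top)).2 fun i _ => hf i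
  refine (lt_min hc hhead).trans_le ?_
  refine le_iInf fun i => ?_
  rcases lt_or_ge i N with hi | hi
  · exact (min_le_right _ _).trans (Finset.inf_le (Finset.mem_range.2 hi))
  · exact (min_le_left _ _).trans (hN i hi)

lemma measurable_locTime (j : ℕ) : Measurable (locTime j) :=
  Measurable.tsum fun n =>
    (measurable_of_countable fun k : ℕ => if k = j then (1 : ℝ≥0∞) else 0).comp
      (measurable_pi_apply n)

lemma measurable_shift (m : ℕ) : Measurable fun (ω : ℕ → ℕ) (n : ℕ) => ω (n + m) := by
  fun_prop

lemma lintegral_tsum_comp_eq_tsum_mul_lintegral_locTime (μ : Measure (ℕ → ℕ)) (g : ℕ → ℝ≥0∞) :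
    ∫⁻ ω, ∑' n, g (ω n) ∂μ = ∑' j, g j * ∫⁻ ω, locTime j ω ∂μ := by
  have hpt : ∀ ω : ℕ → ℕ, ∑' n, g (ω n) = ∑' j, g j * locTime j ω := fun ω => by
    simp_rw [locTime, ← ENNReal.tsum_mul_left, mul_ite, mul_one, mul_zero]
    rw [ENNReal.tsum_comm]
    refine tsum_congr fun n => ?_
    rw [tsum_eq_single (ω n) fun k hk => if_neg (Ne.symm hk), if_pos rfl]
  simp_rw [hpt]
  rw [lintegral_tsum fun j => ((measurable_locTime j).const_mul _).aemeasurable]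
  exact tsum_congr fun j => lintegral_const_mul _ (measurable_locTime j)

def firstVisitAt (j m : ℕ) : Set (ℕ → ℕ) := {ω | ω m = j ∧ ∀ n < m, ω n ≠ j}

lemma measurableSet_firstVisitAt (j m : ℕ) : MeasurableSet (firstVisitAt j m) := by
  unfold firstVisitAt; measurability

lemma firstVisitAt_succ (j m : ℕ) :
    firstVisitAt j (m + 1) = {ω | ω 0 ≠ j} ∩ (fun ω n => ω (n + 1)) ⁻¹' firstVisitAt j m := by
  ext ω
  simp only [firstVisitAt, Set.mem_inter_iff, Set.mem_preimage, Set.mem_ofPred_eq]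
  constructor
  · rintro ⟨hm, hlt⟩
    exact ⟨hlt 0 (by omega), hm, fun n hn => hlt (n + 1) (by omega)⟩
  · rintro ⟨h0, hm, hlt⟩
    refine ⟨hm, fun n hn => ?_⟩
    cases n with
    | zero => exact h0
    | succ n => exact hlt n (by omega)

lemma eq_of_mem_firstVisitAt {j m m' : ℕ} {ω : ℕ → ℕ} (h : ω ∈ firstVisitAt j m)
    (h' : ω ∈ firstVisitAt j m') : m = m' := by
  by_contra hne
  rcases Nat.lt_or_gt_of_ne hne with hlt | hlt
  · exact h'.2 m hlt h.1
  · exact h.2 m' hlt h'.1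

lemma pairwise_disjoint_firstVisitAt (j : ℕ) :
    Pairwise (Function.onFun Disjoint (firstVisitAt j)) :=
  fun _ _ hne => Set.disjoint_left.2 fun _ h h' => hne (eq_of_mem_firstVisitAt h h')

lemma iUnion_firstVisitAt (j : ℕ) : ⋃ m, firstVisitAt j m = {ω | ∃ n, ω n = j} := by
  classical
  ext ω
  simp only [Set.mem_iUnion, Set.mem_ofPred_eq]
  refine ⟨fun ⟨m, hm⟩ => ⟨m, hm.1⟩, fun h => ⟨Nat.find h, Nat.find_spec h, fun n hn => ?_⟩⟩
  exact Nat.find_min h hn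

lemma locTime_eq_tsum_indicator_firstVisitAt (j : ℕ) (ω : ℕ → ℕ) :
    locTime j ω = ∑' m, (firstVisitAt j m).indicator (fun ω => locTime j fun n => ω (n + m)) ω := by
  by_cases h : ∃ n, ω n = j
  · have hmem : ω ∈ ⋃ m, firstVisitAt j m := by rwa [iUnion_firstVisitAt]
    obtain ⟨m, hm⟩ := Set.mem_iUnion.1 hmem
    have hother : ∀ m' ≠ m,
        (firstVisitAt j m').indicator (fun ω => locTime j fun n => ω (n + m')) ω = 0 :=
      fun m' hm' => Set.indicator_of_notMem (fun h' => hm' (eq_of_mem_firstVisitAt h' hm)) _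
    rw [tsum_eq_single m hother, Set.indicator_of_mem hm]
    have hsplit := ENNReal.summable.sum_add_tsum_nat_add'
      (f := fun n => if ω n = j then (1 : ℝ≥0∞) else 0) (k := m)
    rw [Finset.sum_eq_zero fun n hn => if_neg (hm.2 n (Finset.mem_range.1 hn)), zero_add] at hsplit
    exact hsplit.symm
  · push Not at h
    have hnot : ∀ m, ω ∉ firstVisitAt j m := fun m hm => h m hm.1
    simp [locTime, h, Set.indicator_of_notMem (hnot _)]

lemma lintegral_tprod_pos {μ : Measure (ℕ → ℕ)} [NeZero μ] {a : ℕ → ℝ≥0∞} (ha : ∀ k, 0 < a k)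
    (h : ∫⁻ ω, ∑' n, (1 - min (a (ω n)) 1) ∂μ ≠ ∞) : 0 < ∫⁻ ω, ∏' n, a (ω n) ∂μ := by
  have ha' : Measurable a := measurable_of_countable a
  have hae : ∀ᵐ ω ∂μ, 0 < ∏' n, a (ω n) := by
    filter_upwards [ae_lt_top (by fun_prop) h] with ω hω
    exact tprod_pos_of_tsum_ne_top (fun n => ha _) hω.ne
  refine pos_iff_ne_zero.2 fun h0 => ?_
  obtain ⟨ω, hpos, hzero⟩ := (hae.and ((lintegral_eq_zero_iff (by fun_prop)).1 h0)).exists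
  exact hpos.ne' hzero

namespace MC

variable (X : MC)

lemma ae_start_s2 (i : ℕ) : ∀ᵐ ω ∂X.μ i, ω 0 = i := by
  have hmeas : MeasurableSet {ω : ℕ → ℕ | ω 0 = i} :=
    measurableSet_eq_fun (measurable_pi_apply 0) measurable_const
  rw [ae_iff_measure_eq hmeas.nullMeasurableSet, measure_univ]
  exact X.start i

lemma lintegral_comp_shift (i : ℕ) {F : (ℕ → ℕ) → ℝ≥0∞} (hF : Measurable F) :
    ∫⁻ ω, F (fun n => ω (n + 1)) ∂X.μ i = ∑' k, X.P i k * ∫⁻ ω, F ω ∂X.μ k := by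
  rw [← lintegral_map hF (measurable_shift 1), X.markov, lintegral_sum_measure]
  simp [lintegral_smul_measure]

lemma lintegral_indicator_firstVisitAt_zero (i j : ℕ) (G : (ℕ → ℕ) → ℝ≥0∞) :
    ∫⁻ ω, (firstVisitAt j 0).indicator G ω ∂X.μ i = if i = j then ∫⁻ ω, G ω ∂X.μ i else 0 := by
  have hae : (firstVisitAt j 0).indicator G =ᵐ[X.μ i] fun ω => if i = j then G ω else 0 := by
    filter_upwards [X.ae_start_s2 i] with ω hω
    simp [firstVisitAt, Set.indicator, hω]
  rw [lintegral_congr_ae hae]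
  split_ifs <;> simp

lemma lintegral_indicator_firstVisitAt_succ (i j m : ℕ) {G : (ℕ → ℕ) → ℝ≥0∞} (hG : Measurable G) :
    ∫⁻ ω, (firstVisitAt j (m + 1)).indicator (fun ω => G fun n => ω (n + 1)) ω ∂X.μ i =
      if i = j then 0 else ∑' k, X.P i k * ∫⁻ ω, (firstVisitAt j m).indicator G ω ∂X.μ k := by
  have hae : (firstVisitAt j (m + 1)).indicator (fun ω => G fun n => ω (n + 1)) =ᵐ[X.μ i]
      fun ω => if i = j then 0 else (firstVisitAt j m).indicator G fun n => ω (n + 1) := by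
    filter_upwards [X.ae_start_s2 i] with ω hω
    rw [firstVisitAt_succ]
    by_cases hij : i = j
    · simp [hω, hij]
    · rw [if_neg hij]
      by_cases hm : (fun n => ω (n + 1)) ∈ firstVisitAt j m
      · have hω' : ω ∈ {ω : ℕ → ℕ | ω 0 ≠ j} ∩ (fun ω n => ω (n + 1)) ⁻¹' firstVisitAt j m :=
          ⟨fun h => hij (hω.symm.trans h), hm⟩
        rw [Set.indicator_of_mem hω', Set.indicator_of_mem hm]
      · rw [Set.indicator_of_notMem fun h => hm h.2, Set.indicator_of_notMem hm]
  rw [lintegral_congr_ae hae]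
  split_ifs
  · simp
  · exact X.lintegral_comp_shift i (hG.indicator (measurableSet_firstVisitAt j m))

-- The strong Markov property at the first visit to `j`, by induction on the visit time.
lemma lintegral_indicator_firstVisitAt_comp_shift (j : ℕ) {F : (ℕ → ℕ) → ℝ≥0∞}
    (hF : Measurable F) (m i : ℕ) :
    ∫⁻ ω, (firstVisitAt j m).indicator (fun ω => F fun n => ω (n + m)) ω ∂X.μ i =
      X.μ i (firstVisitAt j m) * ∫⁻ ω, F ω ∂X.μ j := by
  induction m generalizing i with
  | zero =>
    rw [← lintegral_indicator_one (measurableSet_firstVisitAt j 0),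
      X.lintegral_indicator_firstVisitAt_zero, X.lintegral_indicator_firstVisitAt_zero]
    split_ifs with hij
    · subst hij; simp
    · simp
  | succ m ih =>
    have hF' : ∫⁻ ω, (firstVisitAt j (m + 1)).indicator (fun ω => F fun n => ω (n + (m + 1))) ω
        ∂X.μ i = if i = j then 0 else ∑' k, X.P i k *
          ∫⁻ ω, (firstVisitAt j m).indicator (fun ω => F fun n => ω (n + m)) ω ∂X.μ k :=
      X.lintegral_indicator_firstVisitAt_succ i j m (hF.comp (measurable_shift m))
    have h1 : ∫⁻ ω, (firstVisitAt j (m + 1)).indicator 1 ω ∂X.μ i = if i = j then 0 else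
        ∑' k, X.P i k * ∫⁻ ω, (firstVisitAt j m).indicator 1 ω ∂X.μ k :=
      X.lintegral_indicator_firstVisitAt_succ i j m measurable_one
    rw [← lintegral_indicator_one (measurableSet_firstVisitAt j (m + 1)), hF', h1]
    split_ifs
    · simp
    · simp only [ih, lintegral_indicator_one (measurableSet_firstVisitAt j m),
        ← ENNReal.tsum_mul_right, mul_assoc]

lemma lintegral_locTime (i j : ℕ) :
    ∫⁻ ω, locTime j ω ∂X.μ i = X.μ i {ω | ∃ n, ω n = j} * ∫⁻ ω, locTime j ω ∂X.μ j := by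
  calc ∫⁻ ω, locTime j ω ∂X.μ i
      = ∫⁻ ω, ∑' m, (firstVisitAt j m).indicator (fun ω => locTime j fun n => ω (n + m)) ω
          ∂X.μ i := lintegral_congr fun ω => locTime_eq_tsum_indicator_firstVisitAt j ω
    _ = ∑' m, X.μ i (firstVisitAt j m) * ∫⁻ ω, locTime j ω ∂X.μ j := by
      have hmeas : ∀ m, Measurable fun ω : ℕ → ℕ => locTime j fun n => ω (n + m) :=
        fun m => (measurable_locTime j).comp (measurable_shift m)
      rw [lintegral_tsum fun m =>
        ((hmeas m).indicator (measurableSet_firstVisitAt j m)).aemeasurable]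
      exact tsum_congr fun m =>
        X.lintegral_indicator_firstVisitAt_comp_shift j (measurable_locTime j) m i
    _ = X.μ i {ω | ∃ n, ω n = j} * ∫⁻ ω, locTime j ω ∂X.μ j := by
      rw [ENNReal.tsum_mul_right, ← measure_iUnion (pairwise_disjoint_firstVisitAt j)
        (measurableSet_firstVisitAt j), iUnion_firstVisitAt]

lemma lintegral_locTime_le_measure_mul_iSup (i j : ℕ) :
    ∫⁻ ω, locTime j ω ∂X.μ i ≤ X.μ i {ω | ∃ n, ω n = j} * ⨆ k, ∫⁻ ω, locTime k ω ∂X.μ k := by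
  rw [X.lintegral_locTime]
  gcongr
  exact le_iSup (fun k => ∫⁻ ω, locTime k ω ∂X.μ k) j

lemma lintegral_locTime_le_iSup (i j : ℕ) :
    ∫⁻ ω, locTime j ω ∂X.μ i ≤ ⨆ k, ∫⁻ ω, locTime k ω ∂X.μ k :=
  (X.lintegral_locTime_le_measure_mul_iSup i j).trans (mul_le_of_le_one_left' prob_le_one)

lemma lintegral_tsum_comp_ne_top {g : ℕ → ℝ≥0∞} (hg : ∑' j, g j ≠ ∞)
    (hloc : (⨆ k, ∫⁻ ω, locTime k ω ∂X.μ k) < ∞) (i : ℕ) :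
    ∫⁻ ω, ∑' n, g (ω n) ∂X.μ i ≠ ∞ := by
  rw [lintegral_tsum_comp_eq_tsum_mul_lintegral_locTime]
  refine ne_top_of_le_ne_top (ENNReal.mul_ne_top hg hloc.ne) ?_
  rw [← ENNReal.tsum_mul_right]
  exact ENNReal.tsum_le_tsum fun j => by gcongr; exact X.lintegral_locTime_le_iSup i j

lemma tendsto_measure_exists_eq_atTop {j : ℕ}
    (h : Tendsto (fun i => X.μ i {ω | ∀ n, j < ω n}) atTop (𝓝 1)) :
    Tendsto (fun i => X.μ i {ω | ∃ n, ω n = j}) atTop (𝓝 0) := by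
  have hmeas : MeasurableSet {ω : ℕ → ℕ | ∀ n, j < ω n} := by measurability
  have hcompl : Tendsto (fun i => X.μ i {ω | ∀ n, j < ω n}ᶜ) atTop (𝓝 0) := by
    simp_rw [prob_compl_eq_one_sub hmeas]
    simpa using ENNReal.Tendsto.sub tendsto_const_nhds h (Or.inl ENNReal.one_ne_top)
  refine tendsto_of_tendsto_of_tendsto_of_le_of_le tendsto_const_nhds hcompl (fun _ => zero_le)
    fun i => measure_mono ?_
  rintro ω ⟨n, hn⟩ h
  exact (h n).ne' hn

theorem tendsto_lintegral_tsum_comp_atTop {g : ℕ → ℝ≥0∞} (hg : ∑' j, g j ≠ ∞)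
    (hlln : ∀ N, Tendsto (fun i => X.μ i {ω | ∀ n, N < ω n}) atTop (𝓝 1))
    (hloc : (⨆ k, ∫⁻ ω, locTime k ω ∂X.μ k) < ∞) :
    Tendsto (fun i => ∫⁻ ω, ∑' n, g (ω n) ∂X.μ i) atTop (𝓝 0) := by
  set C := ⨆ k, ∫⁻ ω, locTime k ω ∂X.μ k
  have hvanish : ∀ j, Tendsto (fun i => g j * ∫⁻ ω, locTime j ω ∂X.μ i) atTop (𝓝 0) := fun j => by
    have hup : Tendsto (fun i => g j * (X.μ i {ω | ∃ n, ω n = j} * C)) atTop (𝓝 0) := by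
      simpa using ENNReal.Tendsto.const_mul
        (ENNReal.Tendsto.mul_const (X.tendsto_measure_exists_eq_atTop (hlln j)) (Or.inr hloc.ne))
        (Or.inr (ENNReal.ne_top_of_tsum_ne_top hg j))
    exact tendsto_of_tendsto_of_tendsto_of_le_of_le tendsto_const_nhds hup (fun _ => zero_le)
      fun i => by gcongr; exact X.lintegral_locTime_le_measure_mul_iSup i j
  simp_rw [lintegral_tsum_comp_eq_tsum_mul_lintegral_locTime]
  simpa using ENNReal.tendsto_tsum_of_dominated_convergence (bound := fun j => g j * C)
    (fun i j => by gcongr; exact X.lintegral_locTime_le_iSup i j)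
    (by rw [ENNReal.tsum_mul_right]; exact ENNReal.mul_ne_top hg hloc.ne) hvanish

end MC

theorem stmt2_general (Q : ℕ → ℕ → ℝ≥0∞) (X : MC)
    (hpos : ∀ i, 0 < qt Q i)
    (hδm : Summable fun i => max (-(deltaQ Q i)) 0)
    (hlln : ∀ N : ℕ, Tendsto (fun i => X.μ i {ω | ∀ n, N < ω n}) atTop (𝓝 1))
    (hloc : (⨆ i, ∫⁻ ω, locTime i ω ∂(X.μ i)) < ∞) :
    1 ≤ Filter.atTop.liminf (fun i => fQ Q X i) ∧ 0 < ⨅ i, fQ Q X i := by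
  have hδ : ∑' j, ENNReal.ofReal (max (-(deltaQ Q j)) 0) ≠ ∞ := by
    rw [← ENNReal.ofReal_tsum_of_nonneg (fun _ => le_max_right _ _) hδm]
    exact ENNReal.ofReal_ne_top
  have hdef : ∑' j, (1 - min (qt Q j) 1) ≠ ∞ :=
    ne_top_of_le_ne_top hδ
      (ENNReal.tsum_le_tsum fun j => one_sub_min_one_le_ofReal_neg_log (hpos j))
  have hlow : ∀ i, 1 - ∫⁻ ω, ∑' n, (1 - min (qt Q (ω n)) 1) ∂X.μ i ≤ fQ Q X i := fun i =>
    calc 1 - ∫⁻ ω, ∑' n, (1 - min (qt Q (ω n)) 1) ∂X.μ i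
        = ∫⁻ _, 1 ∂X.μ i - ∫⁻ ω, ∑' n, (1 - min (qt Q (ω n)) 1) ∂X.μ i := by simp
      _ ≤ ∫⁻ ω, 1 - ∑' n, (1 - min (qt Q (ω n)) 1) ∂X.μ i :=
        lintegral_sub_le _ _ (Measurable.tsum fun n =>
          (measurable_of_countable fun k => 1 - min (qt Q k) 1).comp (measurable_pi_apply n))
      _ ≤ fQ Q X i := lintegral_mono fun ω => one_sub_tsum_le_tprod _
  have hlim : Tendsto (fun i => 1 - ∫⁻ ω, ∑' n, (1 - min (qt Q (ω n)) 1) ∂X.μ i) atTop (𝓝 1) := by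
    simpa using ENNReal.Tendsto.sub tendsto_const_nhds
      (X.tendsto_lintegral_tsum_comp_atTop hdef hlln hloc) (Or.inl ENNReal.one_ne_top)
  refine ⟨hlim.liminf_eq.symm.le.trans (liminf_le_liminf (.of_forall hlow)), ?_⟩
  refine lt_iInf_of_forall_lt_of_eventually_le
    (fun i => lintegral_tprod_pos hpos (X.lintegral_tsum_comp_ne_top hdef hloc i))
    (ENNReal.half_pos one_ne_zero) ?_
  have hhalf : (1 / 2 : ℝ≥0∞) < 1 := ENNReal.half_lt_self one_ne_zero ENNReal.one_ne_top
  filter_upwards [hlim.eventually (lt_mem_nhds hhalf)] with i hi using hi.le.trans (hlow i)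

theorem stmt2 (Q : ℕ → ℕ → ℝ≥0∞) (X : MC)
    (hpos : ∀ i, 0 < qt Q i) (hfin : ∀ i, qt Q i < ∞)
    (hirr : Irred Q)
    (hP : ∀ i j, X.P i j = Q i j / qt Q i)
    (hδm : Summable fun i => max (-(deltaQ Q i)) 0)
    (hlln : ∀ N : ℕ, Tendsto (fun i => X.μ i {ω | ∀ n, N < ω n}) atTop (𝓝 1))
    (hloc : (⨆ i, ∫⁻ ω, locTime i ω ∂(X.μ i)) < ∞) :
    1 ≤ Filter.atTop.liminf (fun i => fQ Q X i) ∧ 0 < ⨅ i, fQ Q X i :=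
  stmt2_general Q X hpos hδm hlln hloc
end

section
/- With the notation of the Cramér-tilted random walk, the harmonic function h(i) = e^{βi} P{min_{n≥0} S^{(β)}ₙ ≥ −i} satisfies the two-sided bound e^{βi} − e^{−β} ≤ h(i) ≤ e^{βi} for all i ∈ ℤ₊. -/
open MeasureTheory Filter Topology
open scoped ENNReal NNReal

open ProbabilityTheory Finset

/-! Under the tilted law `e^{βx} ν(dx)` every step satisfies `E e^{-βξ} = 1`, so `e^{-β Sₙ}` is a
nonnegative martingale of mean one. Doob's maximal inequality turns this into the Cramér–Lundberg
bound `P{∃ n, Sₙ ≤ -i-1} ≤ e^{-β(i+1)}`, and `h i = e^{βi} (1 - P{∃ n, Sₙ < -i})`. -/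

namespace ProbabilityTheory

section PastFiltration

variable {Ω E : Type*} {m : MeasurableSpace Ω} [mE : MeasurableSpace E]

/-- Unlike `Filtration.natural`, time `n` is excluded, so that `X n` is independent of the
`n`-th σ-algebra. -/
def pastFiltration (X : ℕ → Ω → E) (hX : ∀ n, Measurable (X n)) : Filtration ℕ m where
  seq n := ⨆ k ∈ Set.Iio n, mE.comap (X k)
  mono' _ _ hnp := biSup_mono fun _ => (Set.Iio_subset_Iio hnp ·)
  le' _ := iSup₂_le fun k _ => (hX k).comap_le

variable {X : ℕ → Ω → E} (hX : ∀ n, Measurable (X n))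

lemma measurable_pastFiltration {k n : ℕ} (hkn : k < n) :
    Measurable[pastFiltration X hX n] (X k) :=
  (comap_measurable (X k)).mono (le_biSup (fun k => mE.comap (X k)) hkn) le_rfl

lemma indep_pastFiltration {μ : Measure Ω} (hind : iIndepFun X μ) (n : ℕ) :
    Indep (pastFiltration X hX n) (mE.comap (X n)) μ := by
  have := indep_iSup_of_disjoint (fun k => (hX k).comap_le) hind.iIndep
    (S := Set.Iio n) (T := {n}) (by simp)
  rwa [_root_.iSup_singleton] at this

end PastFiltration

section ExponentialMartingale

variable {Ω : Type*} {m : MeasurableSpace Ω} {μ : Measure Ω} {X : ℕ → Ω → ℝ}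
  (hX : ∀ n, Measurable (X n))

lemma measurable_pastFiltration_exp_mul_sum (t : ℝ) (n : ℕ) :
    Measurable[pastFiltration X hX n] fun ω => Real.exp (t * ∑ k ∈ range n, X k ω) := by
  have := fun k (hk : k ∈ range n) => measurable_pastFiltration hX (mem_range.1 hk)
  fun_prop

lemma setLIntegral_exp_mul_sum_succ (hind : iIndepFun X μ) (t : ℝ) (n : ℕ) {s : Set Ω}
    (hs : MeasurableSet[pastFiltration X hX n] s) :
    ∫⁻ ω in s, ENNReal.ofReal (Real.exp (t * ∑ k ∈ range (n + 1), X k ω)) ∂μ =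
      (∫⁻ ω in s, ENNReal.ofReal (Real.exp (t * ∑ k ∈ range n, X k ω)) ∂μ) *
        ∫⁻ ω, ENNReal.ofReal (Real.exp (t * X n ω)) ∂μ := by
  have hsplit : ∀ ω, ENNReal.ofReal (Real.exp (t * ∑ k ∈ range (n + 1), X k ω)) =
      ENNReal.ofReal (Real.exp (t * ∑ k ∈ range n, X k ω)) *
        ENNReal.ofReal (Real.exp (t * X n ω)) := fun ω => by
    rw [sum_range_succ, mul_add, Real.exp_add, ENNReal.ofReal_mul (Real.exp_nonneg _)]
  have hsm := (pastFiltration X hX).le n s hs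
  simp_rw [hsplit, ← lintegral_indicator hsm, Set.indicator_mul_left]
  have hXn : Measurable[MeasurableSpace.comap (X n) inferInstance] (X n) := comap_measurable _
  exact lintegral_mul_eq_lintegral_mul_lintegral_of_independent_measurableSpace
    ((pastFiltration X hX).le n) (hX n).comap_le (indep_pastFiltration hX hind n)
    ((measurable_pastFiltration_exp_mul_sum hX t n).ennreal_ofReal.indicator hs) (by fun_prop)

variable (hind : iIndepFun X μ) {t : ℝ}
  (hmgf : ∀ n, ∫⁻ ω, ENNReal.ofReal (Real.exp (t * X n ω)) ∂μ = 1)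
include hX hind hmgf

lemma setLIntegral_exp_mul_sum_succ_eq (n : ℕ) {s : Set Ω}
    (hs : MeasurableSet[pastFiltration X hX n] s) :
    ∫⁻ ω in s, ENNReal.ofReal (Real.exp (t * ∑ k ∈ range (n + 1), X k ω)) ∂μ =
      ∫⁻ ω in s, ENNReal.ofReal (Real.exp (t * ∑ k ∈ range n, X k ω)) ∂μ := by
  rw [setLIntegral_exp_mul_sum_succ hX hind t n hs, hmgf, mul_one]

lemma lintegral_exp_mul_sum (n : ℕ) :
    ∫⁻ ω, ENNReal.ofReal (Real.exp (t * ∑ k ∈ range n, X k ω)) ∂μ = μ Set.univ := by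
  induction n with
  | zero => simp
  | succ n ih =>
    rw [← setLIntegral_univ, setLIntegral_exp_mul_sum_succ_eq hX hind hmgf n MeasurableSet.univ,
      setLIntegral_univ, ih]

lemma martingale_exp_mul_sum [IsFiniteMeasure μ] :
    Martingale (fun n ω => Real.exp (t * ∑ k ∈ range n, X k ω)) (pastFiltration X hX) μ := by
  have hpos : ∀ (ρ : Measure Ω) n, 0 ≤ᵐ[ρ] fun ω => Real.exp (t * ∑ k ∈ range n, X k ω) :=
    fun _ _ => ae_of_all _ fun _ => (Real.exp_pos _).le
  refine martingale_of_setIntegral_eq_succ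
    (fun n => (measurable_pastFiltration_exp_mul_sum hX t n).stronglyMeasurable)
    (fun n => ⟨by fun_prop, (hasFiniteIntegral_iff_ofReal (hpos μ n)).2 ?_⟩) fun n s hs => ?_
  · rw [lintegral_exp_mul_sum hX hind hmgf]
    exact measure_lt_top μ _
  · rw [integral_eq_lintegral_of_nonneg_ae (hpos _ n) (by fun_prop),
      integral_eq_lintegral_of_nonneg_ae (hpos _ (n + 1)) (by fun_prop),
      setLIntegral_exp_mul_sum_succ_eq hX hind hmgf n hs]

end ExponentialMartingale

theorem _root_.MeasureTheory.Submartingale.mul_measureReal_exists_le_le {Ω : Type*} {m : MeasurableSpace Ω} {μ : Measure Ω}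
    [IsFiniteMeasure μ] {ℱ : Filtration ℕ m} {f : ℕ → Ω → ℝ} (hsub : Submartingale f ℱ μ)
    (hnonneg : 0 ≤ f) {ε C : ℝ} (hε : 0 ≤ ε) (hC : ∀ n, ∫ ω, f n ω ∂μ ≤ C) :
    ε * μ.real {ω | ∃ n, ε ≤ f n ω} ≤ C := by
  set E : ℕ → Set Ω := fun n =>
    {ω | ((ε.toNNReal : ℝ≥0) : ℝ) ≤ (range (n + 1)).sup' nonempty_range_add_one fun k => f k ω}
  have hE : {ω | ∃ n, ε ≤ f n ω} = ⋃ n, E n := by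
    ext ω
    simp only [E, Set.mem_ofPred_eq, Set.mem_iUnion, Real.coe_toNNReal _ hε, le_sup'_iff,
      mem_range]
    exact ⟨fun ⟨n, hn⟩ => ⟨n, n, n.lt_succ_self, hn⟩, fun ⟨_, k, _, hk⟩ => ⟨k, hk⟩⟩
  have hEmono : Monotone E := fun a b hab ω hω =>
    le_trans (α := ℝ) hω (sup'_mono _ (range_subset_range.2 (Nat.succ_le_succ hab)) _)
  have hbound : (ε.toNNReal : ℝ≥0∞) * μ {ω | ∃ n, ε ≤ f n ω} ≤ ENNReal.ofReal C := by
    rw [hE, hEmono.measure_iUnion, ENNReal.mul_iSup]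
    exact iSup_le fun n => (maximal_ineq hsub hnonneg n).trans <| ENNReal.ofReal_le_ofReal <|
      (setIntegral_le_integral (hsub.integrable n) (ae_of_all _ (hnonneg n))).trans (hC n)
  have hC0 : 0 ≤ C := (integral_nonneg (hnonneg 0)).trans (hC 0)
  have := ENNReal.toReal_le_of_le_ofReal hC0 hbound
  rwa [ENNReal.toReal_mul, ENNReal.coe_toReal, Real.coe_toNNReal _ hε] at this

theorem measureReal_exists_sum_le_le {Ω : Type*} {m : MeasurableSpace Ω} {μ : Measure Ω}
    [IsProbabilityMeasure μ] {X : ℕ → Ω → ℝ} (hX : ∀ n, Measurable (X n))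
    (hind : iIndepFun X μ) {β : ℝ} (hβ : 0 ≤ β)
    (hmgf : ∀ n, ∫⁻ ω, ENNReal.ofReal (Real.exp (-β * X n ω)) ∂μ = 1) (a : ℝ) :
    μ.real {ω | ∃ n, ∑ k ∈ range n, X k ω ≤ a} ≤ Real.exp (β * a) := by
  have hmean : ∀ n, ∫ ω, Real.exp (-β * ∑ k ∈ range n, X k ω) ∂μ ≤ 1 := fun n => by
    rw [integral_eq_lintegral_of_nonneg_ae (ae_of_all _ fun _ => (Real.exp_pos _).le)
      (by fun_prop), lintegral_exp_mul_sum hX hind hmgf, measure_univ, ENNReal.toReal_one]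
  have hville := (martingale_exp_mul_sum hX hind hmgf).submartingale.mul_measureReal_exists_le_le
    (fun _ _ => (Real.exp_pos _).le) (Real.exp_nonneg (-β * a)) hmean
  have hsub : {ω | ∃ n, ∑ k ∈ range n, X k ω ≤ a} ⊆
      {ω | ∃ n, Real.exp (-β * a) ≤ Real.exp (-β * ∑ k ∈ range n, X k ω)} :=
    fun ω ⟨n, hn⟩ => ⟨n, Real.exp_le_exp.2 (by nlinarith)⟩
  calc μ.real {ω | ∃ n, ∑ k ∈ range n, X k ω ≤ a}
      = Real.exp (β * a) * (Real.exp (-β * a) * μ.real {ω | ∃ n, ∑ k ∈ range n, X k ω ≤ a}) := by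
        rw [← mul_assoc, ← Real.exp_add, neg_mul, add_neg_cancel, Real.exp_zero, one_mul]
    _ ≤ Real.exp (β * a) * 1 := by
        gcongr
        exact (mul_le_mul_of_nonneg_left (measureReal_mono hsub) (Real.exp_nonneg _)).trans hville
    _ = Real.exp (β * a) := mul_one _

lemma lintegral_exp_neg_mul_of_map_eq_withDensity {Ω : Type*} {m : MeasurableSpace Ω}
    {μ : Measure Ω} {Y : Ω → ℤ} (hY : Measurable Y) {ν : Measure ℤ} {β : ℝ}
    (hlaw : μ.map Y = ν.withDensity fun x => ENNReal.ofReal (Real.exp (β * x))) :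
    ∫⁻ ω, ENNReal.ofReal (Real.exp (-β * Y ω)) ∂μ = ν Set.univ := by
  rw [← lintegral_map (f := fun x : ℤ => ENNReal.ofReal (Real.exp (-β * x)))
      (measurable_of_countable _) hY, hlaw,
    lintegral_withDensity_eq_lintegral_mul _ (measurable_of_countable _)
      (measurable_of_countable _)]
  simp [← ENNReal.ofReal_mul (Real.exp_nonneg _), ← Real.exp_add]

end ProbabilityTheory

theorem stmt14_general {Ω : Type*} [MeasurableSpace Ω] (μ : Measure Ω) [IsProbabilityMeasure μ]
    (ν : Measure ℤ) [IsProbabilityMeasure ν]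
    (β : ℝ) (hβ : 0 < β)
    (ξ : ℕ → Ω → ℤ) (hmeas : ∀ n, Measurable (ξ n))
    (hiid : ProbabilityTheory.iIndepFun ξ μ)
    (hlaw : ∀ n, μ.map (ξ n) =
      ν.withDensity fun x => ENNReal.ofReal (Real.exp (β * x)))
    (h : ℕ → ℝ)
    (hdef : ∀ i : ℕ, h i = Real.exp (β * i) *
      (μ {ω | ∀ n : ℕ, -(i : ℤ) ≤ ∑ k ∈ Finset.range n, ξ k ω}).toReal) :
    ∀ i : ℕ, Real.exp (β * i) - Real.exp (-β) ≤ h i ∧ h i ≤ Real.exp (β * i) := by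
  intro i
  set A := {ω | ∀ n : ℕ, -(i : ℤ) ≤ ∑ k ∈ Finset.range n, ξ k ω}
  set B := {ω | ∃ n, ∑ k ∈ Finset.range n, (ξ k ω : ℝ) ≤ -(i : ℝ) - 1}
  have hB : μ.real B ≤ Real.exp (β * (-(i : ℝ) - 1)) :=
    measureReal_exists_sum_le_le (X := fun n ω => (ξ n ω : ℝ))
      (fun n => (measurable_of_countable _).comp (hmeas n))
      (hiid.comp (fun _ => Int.cast) fun _ => measurable_of_countable _) hβ.le
      (fun n => by rw [lintegral_exp_neg_mul_of_map_eq_withDensity (hmeas n) (hlaw n),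
        measure_univ]) _
  have hAB : 1 ≤ μ.real A + μ.real B := by
    refine (probReal_univ (μ := μ)).symm.le.trans
      ((measureReal_mono fun ω _ => ?_).trans (measureReal_union_le A B))
    by_cases hω : ω ∈ A
    · exact Or.inl hω
    · obtain ⟨n, hn⟩ : ∃ n, ∑ k ∈ Finset.range n, ξ k ω < -(i : ℤ) := by simpa [A] using hω
      exact Or.inr ⟨n, by exact_mod_cast Int.le_sub_one_of_lt hn⟩
  have hexp : Real.exp (β * i) * Real.exp (β * (-(i : ℝ) - 1)) = Real.exp (-β) := by
    rw [← Real.exp_add]; ring_nf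
  rw [hdef i, ← measureReal_def]
  constructor
  · nlinarith [Real.exp_pos (β * i)]
  · exact mul_le_of_le_one_right (Real.exp_nonneg _) measureReal_le_one

theorem stmt14 {Ω : Type*} [MeasurableSpace Ω] (μ : Measure Ω) [IsProbabilityMeasure μ]
    (ν : Measure ℤ) [IsProbabilityMeasure ν]
    (hint : Integrable (fun x : ℤ => (x : ℝ)) ν) (hneg : ∫ x, (x : ℝ) ∂ν < 0)
    (β : ℝ) (hβ : 0 < β)
    (hcram : ∫⁻ x, ENNReal.ofReal (Real.exp (β * x)) ∂ν = 1)
    (ξ : ℕ → Ω → ℤ) (hmeas : ∀ n, Measurable (ξ n))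
    (hiid : ProbabilityTheory.iIndepFun ξ μ)
    (hlaw : ∀ n, μ.map (ξ n) =
      ν.withDensity fun x => ENNReal.ofReal (Real.exp (β * x)))
    (h : ℕ → ℝ)
    (hdef : ∀ i : ℕ, h i = Real.exp (β * i) *
      (μ {ω | ∀ n : ℕ, -(i : ℤ) ≤ ∑ k ∈ Finset.range n, ξ k ω}).toReal) :
    ∀ i : ℕ, Real.exp (β * i) - Real.exp (-β) ≤ h i ∧ h i ≤ Real.exp (β * i) :=
  stmt14_general μ ν β hβ ξ hmeas hiid hlaw h hdef
end

section
/- Let S^{(β)} be the Cramér tilt of a negatively drifted lattice random walk S. Then for every l ≥ 0, P{min_{n≥0} S^{(β)}ₙ = −l} = P{τ₁^{(β)} = ∞} e^{−βl} u(l), where u(l) is the mass function of the renewal process of strict descending ladder heights of S and τ₁^{(β)} is the first strict descending ladder epoch of S^{(β)}. Consequently the harmonic function h(i) = e^{βi} P{min_{n≥0} S^{(β)}ₙ ≥ −i} equals (1 − Ee^{−βχ₁}) ∑_{j=0}^{i} e^{β(i−j)} u(j), where χ₁ is the first strict descending ladder height of S. -/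
open MeasureTheory Filter Topology
open scoped ENNReal NNReal

/-!
If the tilted walk attains its minimum `-l`, split according to the first time `n` it does so:
`n` is then a strict descending ladder epoch of height `-l`, and the walk restarted at time `n`
never goes below `0`. The first event is determined by the first `n` steps and the second by
the later ones, so they are independent, and the restarted walk has the law of the walk itself.
On an event determined by the first `n` steps the tilted law has density `e^{β S_n}` relative
to the untilted one, which equals `e^{-βl}` on the ladder event; summing over `n` produces `u l`.
The same change of measure gives `P{τ₁^{(β)} < ∞} = E[e^{βχ₁}; τ₁ < ∞]`, and the formula for `h`
is the first identity summed over the possible minima `-l ≥ -i`.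
-/

open ProbabilityTheory Finset Function

theorem MeasureTheory.Measure.pi_withDensity_of_countable {ι : Type*} [Fintype ι]
    {X : ι → Type*} [∀ i, MeasurableSpace (X i)] [∀ i, MeasurableSingletonClass (X i)]
    [Countable (∀ i, X i)] (μ : ∀ i, Measure (X i)) (f : ∀ i, X i → ℝ≥0∞)
    [∀ i, SigmaFinite (μ i)] [∀ i, SigmaFinite ((μ i).withDensity (f i))] :
    Measure.pi (fun i => (μ i).withDensity (f i)) =
      (Measure.pi μ).withDensity (fun x => ∏ i, f i (x i)) := by
  refine Measure.ext_of_singleton fun x => ?_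
  rw [withDensity_apply _ (measurableSet_singleton x), lintegral_singleton,
    ← Set.univ_pi_singleton, Measure.pi_pi, Measure.pi_pi, ← prod_mul_distrib]
  refine prod_congr rfl fun i _ => ?_
  rw [withDensity_apply _ (measurableSet_singleton _), lintegral_singleton]

theorem DependsOn.restrict_preimage_image {ι : Type*} {π : ι → Type*} {A : Set (∀ i, π i)}
    {s : Finset ι} (hA : DependsOn (· ∈ A) ↑s) : s.restrict ⁻¹' (s.restrict '' A) = A := by
  refine Set.Subset.antisymm ?_ (Set.subset_preimage_image _ _)
  rintro y ⟨z, hz, hzy⟩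
  exact cast (hA fun i hi => congrFun hzy ⟨i, hi⟩) hz

structure IsIID {ι Ω E : Type*} [MeasurableSpace Ω] [MeasurableSpace E] (ξ : ι → Ω → E)
    (ν : Measure E) (μ : Measure Ω) : Prop where
  measurable : ∀ i, Measurable (ξ i)
  indep : iIndepFun ξ μ
  map_eq : ∀ i, μ.map (ξ i) = ν

namespace IsIID

variable {ι Ω Ω' E : Type*} [MeasurableSpace Ω] [MeasurableSpace Ω'] [MeasurableSpace E]
  {μ : Measure Ω} {μ' : Measure Ω'} {ν : Measure E}

theorem measurable_path {ξ : ι → Ω → E} (h : IsIID ξ ν μ) : Measurable fun ω i => ξ i ω :=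
  measurable_pi_lambda _ h.measurable

theorem measure_preimage_eq_setLIntegral_prod [IsProbabilityMeasure μ] [IsProbabilityMeasure μ']
    [MeasurableSingletonClass E] [Countable E] {f : E → ℝ≥0∞} {ξ : ι → Ω → E}
    {ξ' : ι → Ω' → E} (h : IsIID ξ ν μ) (h' : IsIID ξ' (ν.withDensity f) μ') (s : Finset ι)
    (A : Set (s → E)) :
    μ' ((fun ω (i : s) => ξ' i ω) ⁻¹' A) =
      ∫⁻ ω in (fun ω (i : s) => ξ i ω) ⁻¹' A, ∏ i : s, f (ξ i ω) ∂μ := by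
  have : ∀ i : s, IsProbabilityMeasure ν := fun i =>
    h.map_eq i ▸ Measure.isProbabilityMeasure_map (h.measurable i).aemeasurable
  have : ∀ i : s, IsProbabilityMeasure (ν.withDensity f) := fun i =>
    h'.map_eq i ▸ Measure.isProbabilityMeasure_map (h'.measurable i).aemeasurable
  have hX : μ.map (fun ω (i : s) => ξ i ω) = Measure.pi fun _ => ν := by
    rw [iIndepFun.map_fun_eq_pi_map (f := fun i : s => ξ i)
      (fun i => (h.measurable i).aemeasurable) (h.indep.precomp Subtype.val_injective)]
    simp only [h.map_eq]
  have hX' : μ'.map (fun ω (i : s) => ξ' i ω) = Measure.pi fun _ => ν.withDensity f := by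
    rw [iIndepFun.map_fun_eq_pi_map (f := fun i : s => ξ' i)
      (fun i => (h'.measurable i).aemeasurable) (h'.indep.precomp Subtype.val_injective)]
    simp only [h'.map_eq]
  have hXm : Measurable fun ω (i : s) => ξ i ω := measurable_pi_lambda _ fun i => h.measurable i
  have hXm' : Measurable fun ω (i : s) => ξ' i ω :=
    measurable_pi_lambda _ fun i => h'.measurable i
  calc μ' ((fun ω (i : s) => ξ' i ω) ⁻¹' A)
      = (Measure.pi fun _ : s => ν.withDensity f) A := by
        rw [← hX', Measure.map_apply hXm' .of_discrete]
    _ = ∫⁻ x in A, ∏ i : s, f (x i) ∂(Measure.pi fun _ : s => ν) := by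
        rw [Measure.pi_withDensity_of_countable, withDensity_apply _ .of_discrete]
    _ = _ := by
        rw [← hX, setLIntegral_map .of_discrete (by fun_prop) hXm]

theorem _root_.ProbabilityTheory.iIndepFun.measure_inter_preimage_shift_eq_mul {ξ : ℕ → Ω → E}
    (hiid : iIndepFun ξ μ) (hmeas : ∀ n, Measurable (ξ n)) (n : ℕ)
    {A : Set (range n → E)} {B : Set (ℕ → E)} (hA : MeasurableSet A) (hB : MeasurableSet B) :
    μ ((fun ω (i : range n) => ξ i ω) ⁻¹' A ∩ (fun ω k => ξ (n + k) ω) ⁻¹' B) =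
      μ ((fun ω (i : range n) => ξ i ω) ⁻¹' A) * μ ((fun ω k => ξ (n + k) ω) ⁻¹' B) := by
  let m : ℕ → MeasurableSpace Ω := fun i => MeasurableSpace.comap (ξ i) inferInstance
  have hindep := indep_iSup_of_disjoint (m := m) (fun i => (hmeas i).comap_le)
    ((iIndepFun_iff_iIndep _ _ _).1 hiid) (S := ↑(range n)) (T := Set.Ici n)
    (Set.disjoint_left.2 fun i hi hi' => by
      simp only [coe_range, Set.mem_Iio, Set.mem_Ici] at hi hi'; omega)
  have hpast : Measurable[⨆ i ∈ (↑(range n) : Set ℕ), m i] fun ω (i : range n) => ξ i ω :=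
    (@measurable_pi_iff _ _ _ (⨆ i ∈ (↑(range n) : Set ℕ), m i) _ _).2 fun i =>
      measurable_iff_comap_le.2 <|
        le_iSup₂ (f := fun j (_ : j ∈ (↑(range n) : Set ℕ)) => m j) i.1 i.2
  have hfuture : Measurable[⨆ i ∈ Set.Ici n, m i] fun ω k => ξ (n + k) ω :=
    (@measurable_pi_iff _ _ _ (⨆ i ∈ Set.Ici n, m i) _ _).2 fun k =>
      measurable_iff_comap_le.2 <|
        le_iSup₂ (f := fun j (_ : j ∈ Set.Ici n) => m j) (n + k) (Nat.le_add_right n k)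
  exact (Indep_iff _ _ _).1 hindep _ _ (hpast hA) (hfuture hB)

theorem measure_preimage_shift {ξ : ℕ → Ω → E} (h : IsIID ξ ν μ) (n : ℕ) {B : Set (ℕ → E)}
    (hB : MeasurableSet B) :
    μ ((fun ω k => ξ (n + k) ω) ⁻¹' B) = μ ((fun ω k => ξ k ω) ⁻¹' B) := by
  have hshift : μ.map (fun ω k => ξ (n + k) ω) = μ.map (fun ω k => ξ k ω) := by
    rw [(h.indep.precomp (add_right_injective n)).map_fun_eq_infinitePi_map
        fun k => h.measurable _, h.indep.map_fun_eq_infinitePi_map h.measurable]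
    simp only [h.map_eq]
  have := congrArg (· B) hshift
  rwa [Measure.map_apply (measurable_pi_lambda _ fun k => h.measurable _) hB,
    Measure.map_apply h.measurable_path hB] at this

theorem measure_inter_shift_eq_mul [MeasurableSingletonClass E] [Countable E] {ξ : ℕ → Ω → E}
    (h : IsIID ξ ν μ) {n : ℕ} {A B : Set (ℕ → E)} (hA : DependsOn (· ∈ A) ↑(range n))
    (hB : MeasurableSet B) :
    μ ((fun ω k => ξ k ω) ⁻¹' (A ∩ (fun y k => y (n + k)) ⁻¹' B)) =
      μ ((fun ω k => ξ k ω) ⁻¹' A) * μ ((fun ω k => ξ k ω) ⁻¹' B) := by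
  rw [← h.measure_preimage_shift n hB, ← hA.restrict_preimage_image]
  exact h.indep.measure_inter_preimage_shift_eq_mul h.measurable n .of_discrete hB

end IsIID

def partialSum (y : ℕ → ℤ) (n : ℕ) : ℤ := ∑ k ∈ range n, y k

@[simp]
theorem partialSum_zero (y : ℕ → ℤ) : partialSum y 0 = 0 := sum_range_zero y

theorem partialSum_add (y : ℕ → ℤ) (n m : ℕ) :
    partialSum y (n + m) = partialSum y n + partialSum (fun k => y (n + k)) m :=
  sum_range_add y n m

theorem partialSum_congr {y z : ℕ → ℤ} {n m : ℕ} (h : ∀ i ∈ (↑(range n) : Set ℕ), y i = z i)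
    (hm : m ≤ n) : partialSum y m = partialSum z m :=
  sum_congr rfl fun k hk => h k (mem_coe.2 (mem_range.2 ((mem_range.1 hk).trans_le hm)))

@[fun_prop]
theorem measurable_partialSum (n : ℕ) : Measurable fun y : ℕ → ℤ => partialSum y n :=
  Finset.measurable_sum _ fun k _ => measurable_pi_apply k

-- `n` is a strict descending ladder epoch `τ_k` (with `τ₀ = 0`) of height `χ₁ + ⋯ + χ_k = l`.
def descLadderSet (l n : ℕ) : Set (ℕ → ℤ) :=
  {y | partialSum y n = -l ∧ ∀ m < n, partialSum y n < partialSum y m}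

def nonnegSet : Set (ℕ → ℤ) := {y | ∀ n, 1 ≤ n → 0 ≤ partialSum y n}

-- `τ₁ = n`, for `n ≥ 1`.
def firstNegSet (n : ℕ) : Set (ℕ → ℤ) :=
  {y | partialSum y n < 0 ∧ ∀ m, 1 ≤ m → m < n → 0 ≤ partialSum y m}

def minEqSet (l : ℕ) : Set (ℕ → ℤ) :=
  {y | (∀ n, -(l : ℤ) ≤ partialSum y n) ∧ ∃ n, partialSum y n = -l}

theorem measurableSet_descLadderSet (l n : ℕ) : MeasurableSet (descLadderSet l n) := by
  unfold descLadderSet; measurability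

theorem measurableSet_nonnegSet : MeasurableSet nonnegSet := by
  unfold nonnegSet; measurability

theorem measurableSet_firstNegSet (n : ℕ) : MeasurableSet (firstNegSet n) := by
  unfold firstNegSet; measurability

theorem measurableSet_minEqSet (l : ℕ) : MeasurableSet (minEqSet l) := by
  unfold minEqSet; measurability

theorem dependsOn_mem_descLadderSet (l n : ℕ) :
    DependsOn (· ∈ descLadderSet l n) ↑(range n) := fun y z h => by
  simp only [descLadderSet, Set.mem_ofPred_eq, partialSum_congr h le_rfl]
  refine propext (and_congr_right' (forall₂_congr fun m hm => ?_))
  rw [partialSum_congr h hm.le]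

theorem dependsOn_mem_firstNegSet (n : ℕ) : DependsOn (· ∈ firstNegSet n) ↑(range n) :=
  fun y z h => by
  simp only [firstNegSet, Set.mem_ofPred_eq, partialSum_congr h le_rfl]
  refine propext (and_congr_right' (forall_congr' fun m => imp_congr_right fun _ =>
    imp_congr_right fun hm => ?_))
  rw [partialSum_congr h hm.le]

theorem pairwise_disjoint_descLadderSet (l : ℕ) : Pairwise (Disjoint on descLadderSet l) :=
  (pairwise_disjoint_on _).2 fun _ _ hmn => Set.disjoint_left.2 fun _ hm hn => by
    have := hn.2 _ hmn
    have := hm.1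
    have := hn.1
    omega

theorem pairwise_disjoint_firstNegSet : Pairwise (Disjoint on fun n => firstNegSet (n + 1)) :=
  (pairwise_disjoint_on _).2 fun m _ hmn => Set.disjoint_left.2 fun _ hm hn => by
    have := hn.2 (m + 1) (by omega) (by omega)
    have := hm.1
    omega

theorem pairwise_disjoint_minEqSet : Pairwise (Disjoint on minEqSet) :=
  fun a b hab => Set.disjoint_left.2 fun y ha hb => by
    obtain ⟨na, hna⟩ := ha.2
    obtain ⟨nb, hnb⟩ := hb.2
    have := ha.1 nb
    have := hb.1 na
    omega

theorem minEqSet_eq_iUnion (l : ℕ) :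
    minEqSet l = ⋃ n, descLadderSet l n ∩ (fun y k => y (n + k)) ⁻¹' nonnegSet := by
  classical
  ext y
  simp only [minEqSet, descLadderSet, nonnegSet, Set.mem_ofPred_eq, Set.mem_iUnion,
    Set.mem_inter_iff, Set.mem_preimage]
  constructor
  · rintro ⟨hge, hex⟩
    have hfirst := Nat.find_spec hex
    refine ⟨Nat.find hex, ⟨hfirst, fun m hm => ?_⟩, fun m _ => ?_⟩
    · have := hge m
      have := Nat.find_min hex hm
      omega
    · have := partialSum_add y (Nat.find hex) m
      have := hge (Nat.find hex + m)
      omega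
  · rintro ⟨n, ⟨hn, hlt⟩, hafter⟩
    refine ⟨fun m => ?_, n, hn⟩
    rcases lt_or_ge m n with hmn | hnm
    · have := hlt m hmn
      omega
    · obtain ⟨k, rfl⟩ := Nat.exists_eq_add_of_le hnm
      have := partialSum_add y n k
      rcases Nat.eq_zero_or_pos k with rfl | hk
      · simp only [partialSum_zero] at this; omega
      · have := hafter k hk
        omega

theorem compl_nonnegSet : nonnegSetᶜ = {y | ∃ n, 1 ≤ n ∧ partialSum y n < 0} := by
  ext y
  simp [nonnegSet]

theorem setOf_exists_neg_eq_iUnion :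
    {y | ∃ n, 1 ≤ n ∧ partialSum y n < 0} = ⋃ n, firstNegSet (n + 1) := by
  classical
  ext y
  simp only [firstNegSet, Set.mem_ofPred_eq, Set.mem_iUnion]
  constructor
  · intro hex
    obtain ⟨n, hn⟩ : ∃ n, Nat.find hex = n + 1 :=
      Nat.exists_eq_add_one.2 (Nat.find_spec hex).1
    refine ⟨n, hn ▸ (Nat.find_spec hex).2, fun m hm1 hm2 => ?_⟩
    by_contra h
    exact Nat.find_min hex (m := m) (by omega) ⟨hm1, by omega⟩
  · rintro ⟨n, hn, -⟩
    exact ⟨n + 1, by omega, hn⟩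

theorem sInf_eq_of_mem_firstNegSet {y : ℕ → ℤ} {n : ℕ} (hy : y ∈ firstNegSet n) (hn : 1 ≤ n) :
    sInf {m | 1 ≤ m ∧ partialSum y m < 0} = n :=
  IsLeast.csInf_eq ⟨⟨hn, hy.1⟩, fun m hm => le_of_not_gt fun h => (hy.2 m hm.1 h).not_gt hm.2⟩

theorem setOf_forall_ge_eq_biUnion (i : ℕ) :
    {y | ∀ n, -(i : ℤ) ≤ partialSum y n} = ⋃ l ∈ range (i + 1), minEqSet l := by
  ext y
  simp only [Set.mem_ofPred_eq, Set.mem_iUnion, mem_range, minEqSet, exists_prop]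
  constructor
  · intro h
    obtain ⟨_, ⟨n, rfl⟩, hmin⟩ := Int.exists_least_of_bdd
      (P := fun z => ∃ n, partialSum y n = z) ⟨-i, by rintro _ ⟨n, rfl⟩; exact h n⟩ ⟨0, 0, by simp⟩
    have h0 := hmin 0 ⟨0, by simp⟩
    have hi := h n
    refine ⟨(-partialSum y n).toNat, by omega, fun m => ?_, n, by omega⟩
    have := hmin _ ⟨m, rfl⟩
    omega
  · rintro ⟨l, hl, hge, -⟩ n
    have := hge n
    omega

noncomputable def expTilt (β : ℝ) (ν : Measure ℤ) : Measure ℤ :=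
  ν.withDensity fun x => ENNReal.ofReal (Real.exp (β * x))

section TiltedWalk

variable {Ω Ω' : Type*} [MeasurableSpace Ω] [MeasurableSpace Ω'] {μ : Measure Ω} {μβ : Measure Ω'}
  {ν : Measure ℤ} {β : ℝ} {ξ : ℕ → Ω → ℤ} {ξβ : ℕ → Ω' → ℤ}

theorem IsIID.measure_preimage_eq_setLIntegral_exp [IsProbabilityMeasure μ]
    [IsProbabilityMeasure μβ] (h : IsIID ξ ν μ) (hβ : IsIID ξβ (expTilt β ν) μβ)
    {A : Set (ℕ → ℤ)} {n : ℕ} (hA : DependsOn (· ∈ A) ↑(range n)) :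
    μβ ((fun ω k => ξβ k ω) ⁻¹' A) =
      ∫⁻ ω in (fun ω k => ξ k ω) ⁻¹' A,
        ENNReal.ofReal (Real.exp (β * partialSum (fun k => ξ k ω) n)) ∂μ := by
  rw [← hA.restrict_preimage_image]
  refine (h.measure_preimage_eq_setLIntegral_prod hβ (range n) _).trans
    (lintegral_congr fun ω => ?_)
  rw [← ENNReal.ofReal_prod_of_nonneg fun _ _ => (Real.exp_pos _).le, ← Real.exp_sum,
    ← mul_sum, partialSum, ← sum_coe_sort (range n)]
  push_cast
  rfl

theorem measure_descLadderSet_expTilt [IsProbabilityMeasure μ] [IsProbabilityMeasure μβ]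
    (h : IsIID ξ ν μ) (hβ : IsIID ξβ (expTilt β ν) μβ) (l n : ℕ) :
    μβ ((fun ω k => ξβ k ω) ⁻¹' descLadderSet l n) =
      ENNReal.ofReal (Real.exp (-(β * l))) * μ ((fun ω k => ξ k ω) ⁻¹' descLadderSet l n) := by
  rw [h.measure_preimage_eq_setLIntegral_exp hβ (dependsOn_mem_descLadderSet l n),
    setLIntegral_congr_fun (h.measurable_path (measurableSet_descLadderSet l n))
      (fun ω hω => by rw [hω.1]), setLIntegral_const]
  push_cast
  ring_nf

theorem measure_minEqSet_expTilt [IsProbabilityMeasure μ] [IsProbabilityMeasure μβ]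
    (h : IsIID ξ ν μ) (hβ : IsIID ξβ (expTilt β ν) μβ) (l : ℕ) :
    μβ ((fun ω k => ξβ k ω) ⁻¹' minEqSet l) =
      μβ ((fun ω k => ξβ k ω) ⁻¹' nonnegSet) * ENNReal.ofReal (Real.exp (-(β * l))) *
        ∑' n, μ ((fun ω k => ξ k ω) ⁻¹' descLadderSet l n) := by
  have hdisj : Pairwise (Disjoint on fun n => (fun ω k => ξβ k ω) ⁻¹'
      (descLadderSet l n ∩ (fun y k => y (n + k)) ⁻¹' nonnegSet)) := fun a b hab =>
    ((pairwise_disjoint_descLadderSet l hab).mono Set.inter_subset_left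
      Set.inter_subset_left).preimage _
  have hmeas : ∀ n, MeasurableSet ((fun ω k => ξβ k ω) ⁻¹'
      (descLadderSet l n ∩ (fun y k => y (n + k)) ⁻¹' nonnegSet)) := fun n =>
    hβ.measurable_path ((measurableSet_descLadderSet l n).inter
      (measurableSet_nonnegSet.preimage (by fun_prop)))
  rw [minEqSet_eq_iUnion, Set.preimage_iUnion, measure_iUnion hdisj hmeas]
  simp_rw [hβ.measure_inter_shift_eq_mul (dependsOn_mem_descLadderSet l _) measurableSet_nonnegSet,
    measure_descLadderSet_expTilt h hβ, ENNReal.tsum_mul_right, ENNReal.tsum_mul_left]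
  ring

theorem setLIntegral_exp_firstLadderHeight_eq [IsProbabilityMeasure μ] [IsProbabilityMeasure μβ]
    (h : IsIID ξ ν μ) (hβ : IsIID ξβ (expTilt β ν) μβ) :
    ∫⁻ ω in {ω | ∃ n, 1 ≤ n ∧ partialSum (fun k => ξ k ω) n < 0},
      ENNReal.ofReal (Real.exp (β * partialSum (fun k => ξ k ω)
        (sInf {n | 1 ≤ n ∧ partialSum (fun k => ξ k ω) n < 0}))) ∂μ =
      μβ {ω | ∃ n, 1 ≤ n ∧ partialSum (fun k => ξβ k ω) n < 0} := by
  change ∫⁻ ω in (fun ω k => ξ k ω) ⁻¹' {y | ∃ n, 1 ≤ n ∧ partialSum y n < 0}, _ ∂μ =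
    μβ ((fun ω k => ξβ k ω) ⁻¹' {y | ∃ n, 1 ≤ n ∧ partialSum y n < 0})
  rw [setOf_exists_neg_eq_iUnion, Set.preimage_iUnion, Set.preimage_iUnion,
    lintegral_iUnion (fun n => h.measurable_path (measurableSet_firstNegSet _))
      (fun a b hab => (pairwise_disjoint_firstNegSet hab).preimage _),
    measure_iUnion (fun a b hab => (pairwise_disjoint_firstNegSet hab).preimage _)
      (fun n => hβ.measurable_path (measurableSet_firstNegSet _))]
  refine tsum_congr fun n => ?_
  rw [h.measure_preimage_eq_setLIntegral_exp hβ (dependsOn_mem_firstNegSet (n + 1))]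
  refine setLIntegral_congr_fun (h.measurable_path (measurableSet_firstNegSet _)) fun ω hω => ?_
  rw [sInf_eq_of_mem_firstNegSet hω n.succ_pos]

theorem exp_mul_measure_setOf_forall_ge_expTilt [IsProbabilityMeasure μ]
    [IsProbabilityMeasure μβ] (h : IsIID ξ ν μ) (hβ : IsIID ξβ (expTilt β ν) μβ) (i : ℕ) :
    ENNReal.ofReal (Real.exp (β * i)) *
        μβ ((fun ω k => ξβ k ω) ⁻¹' {y | ∀ n, -(i : ℤ) ≤ partialSum y n}) =
      μβ ((fun ω k => ξβ k ω) ⁻¹' nonnegSet) * ∑ j ∈ range (i + 1),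
        ENNReal.ofReal (Real.exp (β * ((i : ℝ) - (j : ℝ)))) *
          ∑' n, μ ((fun ω k => ξ k ω) ⁻¹' descLadderSet j n) := by
  rw [setOf_forall_ge_eq_biUnion, Set.preimage_iUnion₂,
    measure_biUnion_finset (fun a _ b _ hab => (pairwise_disjoint_minEqSet hab).preimage _)
      (fun l _ => hβ.measurable_path (measurableSet_minEqSet l)), mul_sum, mul_sum]
  refine sum_congr rfl fun j _ => ?_
  have hexp : ENNReal.ofReal (Real.exp (β * i)) * ENNReal.ofReal (Real.exp (-(β * j))) =
      ENNReal.ofReal (Real.exp (β * ((i : ℝ) - (j : ℝ)))) := by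
    rw [← ENNReal.ofReal_mul (Real.exp_pos _).le, ← Real.exp_add, mul_sub, sub_eq_add_neg]
  rw [measure_minEqSet_expTilt h hβ, ← hexp]
  ring

end TiltedWalk

theorem stmt15_general {Ω Ω' : Type*} [MeasurableSpace Ω] [MeasurableSpace Ω']
    (μ : Measure Ω) [IsProbabilityMeasure μ] (μβ : Measure Ω') [IsProbabilityMeasure μβ]
    (ν : Measure ℤ)
    (β : ℝ)
    (ξ : ℕ → Ω → ℤ) (hmeas : ∀ n, Measurable (ξ n))
    (hiid : ProbabilityTheory.iIndepFun ξ μ)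
    (hlaw : ∀ n, μ.map (ξ n) = ν)
    (ξβ : ℕ → Ω' → ℤ) (hmeasβ : ∀ n, Measurable (ξβ n))
    (hiidβ : ProbabilityTheory.iIndepFun ξβ μβ)
    (hlawβ : ∀ n, μβ.map (ξβ n) =
      ν.withDensity fun x => ENNReal.ofReal (Real.exp (β * x)))
    (S : ℕ → Ω → ℤ) (hS : ∀ n ω, S n ω = ∑ k ∈ Finset.range n, ξ k ω)
    (Sβ : ℕ → Ω' → ℤ) (hSβ : ∀ n ω, Sβ n ω = ∑ k ∈ Finset.range n, ξβ k ω)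
    (u : ℕ → ℝ≥0∞)
    (hu : ∀ l : ℕ, u l =
      ∑' n : ℕ, μ {ω | S n ω = -(l : ℤ) ∧ ∀ m < n, S n ω < S m ω})
    (Echi : ℝ≥0∞)
    (hEchi : Echi = ∫⁻ ω in {ω | ∃ n : ℕ, 1 ≤ n ∧ S n ω < 0},
      ENNReal.ofReal (Real.exp (β * (S (sInf {n : ℕ | 1 ≤ n ∧ S n ω < 0}) ω))) ∂μ) :
    (∀ l : ℕ,
      μβ {ω | (∀ n, -(l : ℤ) ≤ Sβ n ω) ∧ ∃ n, Sβ n ω = -(l : ℤ)} =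
        μβ {ω | ∀ n, 1 ≤ n → 0 ≤ Sβ n ω} * ENNReal.ofReal (Real.exp (-(β * l))) * u l) ∧
    ∀ i : ℕ,
      ENNReal.ofReal (Real.exp (β * i)) * μβ {ω | ∀ n, -(i : ℤ) ≤ Sβ n ω} =
        (1 - Echi) * ∑ j ∈ Finset.range (i + 1),
          ENNReal.ofReal (Real.exp (β * ((i : ℝ) - (j : ℝ)))) * u j := by
  obtain rfl : S = fun n ω => partialSum (fun k => ξ k ω) n := funext₂ hS
  obtain rfl : Sβ = fun n ω => partialSum (fun k => ξβ k ω) n := funext₂ hSβ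
  obtain rfl : u = fun l => ∑' n, μ ((fun ω k => ξ k ω) ⁻¹' descLadderSet l n) := funext hu
  have h : IsIID ξ ν μ := ⟨hmeas, hiid, hlaw⟩
  have hβ : IsIID ξβ (expTilt β ν) μβ := ⟨hmeasβ, hiidβ, hlawβ⟩
  have hstay : μβ ((fun ω k => ξβ k ω) ⁻¹' nonnegSet) = 1 - Echi := by
    have hhit : {ω | ∃ n, 1 ≤ n ∧ partialSum (fun k => ξβ k ω) n < 0} =
        ((fun ω k => ξβ k ω) ⁻¹' nonnegSet)ᶜ := by
      rw [← Set.preimage_compl, compl_nonnegSet]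
      rfl
    rw [hEchi, setLIntegral_exp_firstLadderHeight_eq h hβ, hhit,
      prob_compl_eq_one_sub (hβ.measurable_path measurableSet_nonnegSet),
      ENNReal.sub_sub_cancel ENNReal.one_ne_top prob_le_one]
  refine ⟨measure_minEqSet_expTilt h hβ, fun i => ?_⟩
  rw [← hstay]
  exact exp_mul_measure_setOf_forall_ge_expTilt h hβ i

theorem stmt15 {Ω Ω' : Type*} [MeasurableSpace Ω] [MeasurableSpace Ω']
    (μ : Measure Ω) [IsProbabilityMeasure μ] (μβ : Measure Ω') [IsProbabilityMeasure μβ]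
    (ν : Measure ℤ) [IsProbabilityMeasure ν]
    (hint : Integrable (fun x : ℤ => (x : ℝ)) ν) (hneg : ∫ x, (x : ℝ) ∂ν < 0)
    (β : ℝ) (hβ : 0 < β)
    (hcram : ∫⁻ x, ENNReal.ofReal (Real.exp (β * x)) ∂ν = 1)
    (ξ : ℕ → Ω → ℤ) (hmeas : ∀ n, Measurable (ξ n))
    (hiid : ProbabilityTheory.iIndepFun ξ μ)
    (hlaw : ∀ n, μ.map (ξ n) = ν)
    (ξβ : ℕ → Ω' → ℤ) (hmeasβ : ∀ n, Measurable (ξβ n))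
    (hiidβ : ProbabilityTheory.iIndepFun ξβ μβ)
    (hlawβ : ∀ n, μβ.map (ξβ n) =
      ν.withDensity fun x => ENNReal.ofReal (Real.exp (β * x)))
    (S : ℕ → Ω → ℤ) (hS : ∀ n ω, S n ω = ∑ k ∈ Finset.range n, ξ k ω)
    (Sβ : ℕ → Ω' → ℤ) (hSβ : ∀ n ω, Sβ n ω = ∑ k ∈ Finset.range n, ξβ k ω)
    (u : ℕ → ℝ≥0∞)
    (hu : ∀ l : ℕ, u l =
      ∑' n : ℕ, μ {ω | S n ω = -(l : ℤ) ∧ ∀ m < n, S n ω < S m ω})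
    (Echi : ℝ≥0∞)
    (hEchi : Echi = ∫⁻ ω in {ω | ∃ n : ℕ, 1 ≤ n ∧ S n ω < 0},
      ENNReal.ofReal (Real.exp (β * (S (sInf {n : ℕ | 1 ≤ n ∧ S n ω < 0}) ω))) ∂μ) :
    (∀ l : ℕ,
      μβ {ω | (∀ n, -(l : ℤ) ≤ Sβ n ω) ∧ ∃ n, Sβ n ω = -(l : ℤ)} =
        μβ {ω | ∀ n, 1 ≤ n → 0 ≤ Sβ n ω} * ENNReal.ofReal (Real.exp (-(β * l))) * u l) ∧
    ∀ i : ℕ,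
      ENNReal.ofReal (Real.exp (β * i)) * μβ {ω | ∀ n, -(i : ℤ) ≤ Sβ n ω} =
        (1 - Echi) * ∑ j ∈ Finset.range (i + 1),
          ENNReal.ofReal (Real.exp (β * ((i : ℝ) - (j : ℝ)))) * u j :=
  stmt15_general μ μβ ν β ξ hmeas hiid hlaw ξβ hmeasβ hiidβ hlawβ S hS Sβ hSβ u hu Echi hEchi
end
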